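/- arXiv:1108.2079 — 2 statements merged into one kernel-verified Lean document; each statement's English description precedes it below -/
import Mathlib

section
/- Let μ : [0,∞) → [0,∞) be continuous with μ(0) = 0, μ > 0 on (0,∞), ∫₀¹ dr/μ(r) = ∞ and ∫₁^∞ dr/μ(r) = ∞, and assume μ is nondecreasing on (0,∞). Let Γ be the associated flow defined by ∫ₓ^{Γ(t,x)} dr/μ(r) = t. Then for each fixed x > 0: the map t ↦ Γ(t,x) is convex on [0,∞), and the map t ↦ ∂ₓΓ(t,x) is nondecreasing. If μ is strictly increasing, then t ↦ Γ(t,x) is strictly convex and t ↦ ∂ₓΓ(t,x) is strictly increasing. -/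
open MeasureTheory Real Filter Set Topology

/-!
Write `G(y) = ∫ₓʸ dr/μ(r)`. The flow `t ↦ Γ(t,x)` is the inverse of the strictly increasing
function `G`, so by the inverse function theorem it solves `∂ₜΓ = μ(Γ)`; as `Γ` increases in `t`,
a monotone `μ` makes this derivative monotone, which is convexity. Moreover the flow property
`Γ(t,y) = Γ(t + G(y), x)` gives `∂ₓΓ(t,x) = ∂ₜΓ(t,x) · G'(x) = μ(Γ(t,x)) / μ(x)`, which is again
monotone in `t`.
-/

section Primitive

variable {μ : ℝ → ℝ}

theorem intervalIntegrable_inv_of_pos (hμc : ContinuousOn μ (Ioi 0)) (hμpos : ∀ x > 0, 0 < μ x)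
    {a b : ℝ} (ha : 0 < a) (hb : 0 < b) : IntervalIntegrable (fun r => (μ r)⁻¹) volume a b := by
  refine ContinuousOn.intervalIntegrable ((hμc.inv₀ fun y hy => (hμpos y hy).ne').mono ?_)
  intro z hz
  rcases Set.mem_uIcc.mp hz with ⟨h, _⟩ | ⟨h, _⟩
  exacts [ha.trans_le h, hb.trans_le h]

theorem hasDerivAt_integral_inv (hμc : ContinuousOn μ (Ioi 0)) (hμpos : ∀ x > 0, 0 < μ x)
    {a y : ℝ} (ha : 0 < a) (hy : 0 < y) :
    HasDerivAt (fun z => ∫ r in a..z, (μ r)⁻¹) (μ y)⁻¹ y := by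
  have hc : ContinuousOn (fun r => (μ r)⁻¹) (Ioi 0) := hμc.inv₀ fun y hy => (hμpos y hy).ne'
  exact intervalIntegral.integral_hasDerivAt_right (intervalIntegrable_inv_of_pos hμc hμpos ha hy)
    (hc.stronglyMeasurableAtFilter isOpen_Ioi y hy) (hc.continuousAt (Ioi_mem_nhds hy))

theorem strictMonoOn_integral_inv (hμc : ContinuousOn μ (Ioi 0)) (hμpos : ∀ x > 0, 0 < μ x)
    {a : ℝ} (ha : 0 < a) : StrictMonoOn (fun z => ∫ r in a..z, (μ r)⁻¹) (Ioi 0) := by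
  intro b hb c hc hbc
  have hpos : 0 < ∫ r in b..c, (μ r)⁻¹ :=
    intervalIntegral.intervalIntegral_pos_of_pos_on (intervalIntegrable_inv_of_pos hμc hμpos hb hc)
      (fun r hr => inv_pos.2 (hμpos r ((mem_Ioi.mp hb).trans hr.1))) hbc
  rw [← intervalIntegral.integral_interval_sub_left (intervalIntegrable_inv_of_pos hμc hμpos ha hc)
    (intervalIntegrable_inv_of_pos hμc hμpos ha hb)] at hpos
  exact sub_pos.mp hpos

end Primitive

section Flow

variable {μ : ℝ → ℝ} {Γ : ℝ → ℝ → ℝ}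

theorem flow_eq_of_integral_eq (hμc : ContinuousOn μ (Ioi 0)) (hμpos : ∀ x > 0, 0 < μ x)
    (hΓ : ∀ t ≥ 0, ∀ x > 0, 0 < Γ t x ∧ ∫ r in x..Γ t x, (μ r)⁻¹ = t)
    {t y z : ℝ} (ht : 0 ≤ t) (hy : 0 < y) (hz : 0 < z) (h : ∫ r in y..z, (μ r)⁻¹ = t) :
    Γ t y = z :=
  (strictMonoOn_integral_inv hμc hμpos hy).injOn (hΓ t ht y hy).1 hz ((hΓ t ht y hy).2.trans h.symm)

theorem flow_zero (hμc : ContinuousOn μ (Ioi 0)) (hμpos : ∀ x > 0, 0 < μ x)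
    (hΓ : ∀ t ≥ 0, ∀ x > 0, 0 < Γ t x ∧ ∫ r in x..Γ t x, (μ r)⁻¹ = t) {y : ℝ} (hy : 0 < y) :
    Γ 0 y = y :=
  flow_eq_of_integral_eq hμc hμpos hΓ le_rfl hy hy intervalIntegral.integral_same

theorem flow_eq_flow_add_integral (hμc : ContinuousOn μ (Ioi 0)) (hμpos : ∀ x > 0, 0 < μ x)
    (hΓ : ∀ t ≥ 0, ∀ x > 0, 0 < Γ t x ∧ ∫ r in x..Γ t x, (μ r)⁻¹ = t)
    {t x y : ℝ} (ht : 0 ≤ t) (hx : 0 < x) (hy : 0 < y) (hs : 0 ≤ t + ∫ r in x..y, (μ r)⁻¹) :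
    Γ t y = Γ (t + ∫ r in x..y, (μ r)⁻¹) x := by
  obtain ⟨hpos, hint⟩ := hΓ _ hs x hx
  refine flow_eq_of_integral_eq hμc hμpos hΓ ht hy hpos ?_
  rw [← intervalIntegral.integral_interval_sub_left (intervalIntegrable_inv_of_pos hμc hμpos hx hpos)
    (intervalIntegrable_inv_of_pos hμc hμpos hx hy), hint, add_sub_cancel_right]

theorem strictMonoOn_flow (hμc : ContinuousOn μ (Ioi 0)) (hμpos : ∀ x > 0, 0 < μ x)
    (hΓ : ∀ t ≥ 0, ∀ x > 0, 0 < Γ t x ∧ ∫ r in x..Γ t x, (μ r)⁻¹ = t) {x : ℝ} (hx : 0 < x) :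
    StrictMonoOn (fun t => Γ t x) (Ici 0) := by
  intro a ha b hb hab
  rw [← (strictMonoOn_integral_inv hμc hμpos hx).lt_iff_lt (hΓ a ha x hx).1 (hΓ b hb x hx).1]
  simpa only [(hΓ a ha x hx).2, (hΓ b hb x hx).2] using hab

theorem surjOn_flow (hμc : ContinuousOn μ (Ioi 0)) (hμpos : ∀ x > 0, 0 < μ x)
    (hΓ : ∀ t ≥ 0, ∀ x > 0, 0 < Γ t x ∧ ∫ r in x..Γ t x, (μ r)⁻¹ = t) {x : ℝ} (hx : 0 < x) :
    SurjOn (fun t => Γ t x) (Ici 0) (Ici x) := by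
  intro v (hv : x ≤ v)
  have hv0 : 0 < v := hx.trans_le hv
  have ht : 0 ≤ ∫ r in x..v, (μ r)⁻¹ := by
    simpa only [intervalIntegral.integral_same] using
      (strictMonoOn_integral_inv hμc hμpos hx).monotoneOn hx hv0 hv
  exact ⟨_, ht, flow_eq_of_integral_eq hμc hμpos hΓ ht hx hv0 rfl⟩

theorem continuousAt_flow (hμc : ContinuousOn μ (Ioi 0)) (hμpos : ∀ x > 0, 0 < μ x)
    (hΓ : ∀ t ≥ 0, ∀ x > 0, 0 < Γ t x ∧ ∫ r in x..Γ t x, (μ r)⁻¹ = t) {x t : ℝ} (hx : 0 < x)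
    (ht : 0 < t) : ContinuousAt (fun s => Γ s x) t := by
  have hmono := strictMonoOn_flow hμc hμpos hΓ hx
  refine hmono.continuousAt_of_image_mem_nhds (Ici_mem_nhds ht) (mem_of_superset ?_
    (surjOn_flow hμc hμpos hΓ hx))
  refine Ici_mem_nhds ?_
  simpa only [flow_zero hμc hμpos hΓ hx] using hmono (mem_Ici.mpr le_rfl) ht.le ht

theorem continuousOn_flow (hμc : ContinuousOn μ (Ioi 0)) (hμpos : ∀ x > 0, 0 < μ x)
    (hΓ : ∀ t ≥ 0, ∀ x > 0, 0 < Γ t x ∧ ∫ r in x..Γ t x, (μ r)⁻¹ = t) {x : ℝ} (hx : 0 < x) :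
    ContinuousOn (fun t => Γ t x) (Ici 0) := by
  rintro t (ht : 0 ≤ t)
  rcases ht.eq_or_lt with rfl | ht
  · refine (strictMonoOn_flow hμc hμpos hΓ hx).continuousWithinAt_right_of_surjOn
      self_mem_nhdsWithin ((surjOn_flow hμc hμpos hΓ hx).mono subset_rfl ?_)
    simp only [flow_zero hμc hμpos hΓ hx, Ioi_subset_Ici_self]
  · exact (continuousAt_flow hμc hμpos hΓ hx ht).continuousWithinAt

theorem hasDerivAt_flow (hμc : ContinuousOn μ (Ioi 0)) (hμpos : ∀ x > 0, 0 < μ x)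
    (hΓ : ∀ t ≥ 0, ∀ x > 0, 0 < Γ t x ∧ ∫ r in x..Γ t x, (μ r)⁻¹ = t) {x t : ℝ} (hx : 0 < x)
    (ht : 0 < t) : HasDerivAt (fun s => Γ s x) (μ (Γ t x)) t := by
  have hinv : ∀ᶠ s in 𝓝 t, ∫ r in x..Γ s x, (μ r)⁻¹ = s := by
    filter_upwards [Ioi_mem_nhds ht] with s hs using (hΓ s hs.le x hx).2
  simpa only [inv_inv] using HasDerivAt.of_local_left_inverse (continuousAt_flow hμc hμpos hΓ hx ht)
    (hasDerivAt_integral_inv hμc hμpos hx (hΓ t ht.le x hx).1)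
    (inv_ne_zero (hμpos _ (hΓ t ht.le x hx).1).ne') hinv

theorem hasDerivAt_flow_apply (hμc : ContinuousOn μ (Ioi 0)) (hμpos : ∀ x > 0, 0 < μ x)
    (hΓ : ∀ t ≥ 0, ∀ x > 0, 0 < Γ t x ∧ ∫ r in x..Γ t x, (μ r)⁻¹ = t) {x t : ℝ} (hx : 0 < x)
    (ht : 0 ≤ t) : HasDerivAt (fun y => Γ t y) (μ (Γ t x) / μ x) x := by
  rcases ht.eq_or_lt with rfl | ht
  · rw [flow_zero hμc hμpos hΓ hx, div_self (hμpos x hx).ne']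
    refine (hasDerivAt_id x).congr_of_eventuallyEq ?_
    filter_upwards [Ioi_mem_nhds hx] with y hy using flow_zero hμc hμpos hΓ hy
  set G : ℝ → ℝ := fun y => ∫ r in x..y, (μ r)⁻¹
  have hG : HasDerivAt G (μ x)⁻¹ x := hasDerivAt_integral_inv hμc hμpos hx hx
  have hGx : G x = 0 := intervalIntegral.integral_same
  have hcomp : HasDerivAt (fun y => Γ (t + G y) x) (μ (Γ t x) * (μ x)⁻¹) x := by
    have hflow : HasDerivAt (fun s => Γ s x) (μ (Γ t x)) (t + G x) := by
      rw [hGx, add_zero]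
      exact hasDerivAt_flow hμc hμpos hΓ hx ht
    exact hflow.comp x (hG.const_add t)
  rw [div_eq_mul_inv]
  refine hcomp.congr_of_eventuallyEq ?_
  have hnear : ∀ᶠ y in 𝓝 x, -t < G y :=
    hG.continuousAt.eventually (eventually_gt_nhds (by rw [hGx]; linarith))
  filter_upwards [Ioi_mem_nhds hx, hnear] with y hy hGy
  exact flow_eq_flow_add_integral hμc hμpos hΓ ht.le hx hy (by linarith)

end Flow

theorem stmt8_general (μ : ℝ → ℝ) (hcont : ContinuousOn μ (Set.Ici 0))
    (hpos : ∀ x > 0, 0 < μ x)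
    (hmono : MonotoneOn μ (Set.Ioi 0))
    (Γ : ℝ → ℝ → ℝ)
    (hΓ : ∀ t ≥ 0, ∀ x > 0, 0 < Γ t x ∧ ∫ r in x..Γ t x, (μ r)⁻¹ = t)
    (x : ℝ) (hx : 0 < x) :
    ConvexOn ℝ (Set.Ici 0) (fun t => Γ t x) ∧
    MonotoneOn (fun t => deriv (fun y => Γ t y) x) (Set.Ici 0) ∧
    (StrictMonoOn μ (Set.Ioi 0) →
      StrictConvexOn ℝ (Set.Ici 0) (fun t => Γ t x) ∧
      StrictMonoOn (fun t => deriv (fun y => Γ t y) x) (Set.Ici 0)) := by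
  have hμc : ContinuousOn μ (Ioi 0) := hcont.mono Ioi_subset_Ici_self
  set g : ℝ → ℝ := fun t => Γ t x
  have hg : StrictMonoOn g (Ici 0) := strictMonoOn_flow hμc hpos hΓ hx
  have hgmaps : MapsTo g (Ici 0) (Ioi 0) := fun t ht => (hΓ t ht x hx).1
  have hgc : ContinuousOn g (Ici 0) := continuousOn_flow hμc hpos hΓ hx
  have hdt : EqOn (μ ∘ g) (deriv g) (interior (Ici 0)) := fun t ht =>
    ((hasDerivAt_flow hμc hpos hΓ hx (interior_Ici.subset ht)).deriv).symm
  have hdx : EqOn (fun t => μ (g t) / μ x) (fun t => deriv (fun y => Γ t y) x) (Ici 0) :=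
    fun t ht => ((hasDerivAt_flow_apply hμc hpos hΓ hx ht).deriv).symm
  have hdiff : DifferentiableOn ℝ g (interior (Ici 0)) := fun t ht =>
    (hasDerivAt_flow hμc hpos hΓ hx (interior_Ici.subset ht)).differentiableAt.differentiableWithinAt
  refine ⟨?_, ?_, fun hsm => ⟨?_, ?_⟩⟩
  · exact (((hmono.comp hg.monotoneOn hgmaps).mono interior_subset).congr hdt).convexOn_of_deriv
      (convex_Ici 0) hgc hdiff
  · exact MonotoneOn.congr (fun a ha b hb hab => div_le_div_of_nonneg_right
      (hmono.comp hg.monotoneOn hgmaps ha hb hab) (hpos x hx).le) hdx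
  · exact (((hsm.comp hg hgmaps).mono interior_subset).congr hdt).strictConvexOn_of_deriv
      (convex_Ici 0) hgc
  · exact StrictMonoOn.congr (fun a ha b hb hab => div_lt_div_of_pos_right
      (hsm.comp hg hgmaps ha hb hab) (hpos x hx)) hdx

theorem stmt8 (μ : ℝ → ℝ) (hcont : ContinuousOn μ (Set.Ici 0)) (h0 : μ 0 = 0)
    (hpos : ∀ x > 0, 0 < μ x)
    (hmono : MonotoneOn μ (Set.Ioi 0))
    (hOsgood : ∫⁻ r in Set.Ioo (0:ℝ) 1, ENNReal.ofReal (μ r)⁻¹ = ⊤)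
    (hInfty : ∫⁻ r in Set.Ioi (1:ℝ), ENNReal.ofReal (μ r)⁻¹ = ⊤)
    (Γ : ℝ → ℝ → ℝ)
    (hΓ : ∀ t ≥ 0, ∀ x > 0, 0 < Γ t x ∧ ∫ r in x..Γ t x, (μ r)⁻¹ = t)
    (x : ℝ) (hx : 0 < x) :
    ConvexOn ℝ (Set.Ici 0) (fun t => Γ t x) ∧
    MonotoneOn (fun t => deriv (fun y => Γ t y) x) (Set.Ici 0) ∧
    (StrictMonoOn μ (Set.Ioi 0) →
      StrictConvexOn ℝ (Set.Ici 0) (fun t => Γ t x) ∧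
      StrictMonoOn (fun t => deriv (fun y => Γ t y) x) (Set.Ici 0)) :=
  stmt8_general μ hcont hpos hmono Γ hΓ x hx
end

section
/- Let μ : [0,∞) → [0,∞) be continuous with μ(0) = 0, twice continuously differentiable on (0,∞), strictly increasing, concave, and positive on (0,∞), satisfying the Osgood condition ∫₀¹ dr/μ(r) = ∞. Define λ(r) = r + log μ(e^{−r}) and ε(r) = λ'(r)/2 for r ∈ ℝ, and assume λ''(r) < 0 for all r > r₀, for some r₀ ∈ ℝ. Then ε is strictly decreasing on (r₀,∞) with values in (0,1/2) and ε(r) → 0 as r → ∞; letting η : (0,δ) → (r₀,∞) be the inverse of ε restricted to (r₀,∞), where δ = lim_{r→r₀⁺} ε(r), and defining α(e) = exp(λ(η(e)) − 2·e·η(e)) for e ∈ (0,δ): (i) x^{1−2ε(r)}·α(ε(r)) = μ(x) for every r > r₀, where x = e^{−r}; (ii) log α is strictly convex on (0,δ); (iii) if in addition λ''(r) + (λ'(r))² ≥ 0 for all r > r₀, then p ↦ p·log(α(1/p)/p) is convex on (1/δ, ∞). -/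
/-!
Beyond `r₀` the function `λ = logProfile μ` is strictly concave, so `ε = λ'/2` decreases.
Concavity of `μ` and `μ 0 = 0` give `x μ'(x) ≤ μ(x)`, and `μ' > 0`, whence `0 ≤ ε < 1/2`. If `ε`
stayed above some `c > 0`, then `λ(r) - 2cr` would increase, i.e. `μ(x) ≳ x^(1-2c)` near `0`, and
`1/μ` would be integrable, against the Osgood condition.

`log α(e) = λ(η e) - 2 e η(e)` is the Legendre transform `sup_r (λ(r) - 2 e r)` of the strictly
concave `λ`, attained only at `r = η e`; a supremum of affine functions of `e` with distinct
maximisers is strictly convex. For (iii), `λ'' + λ'² ≥ 0` says that `exp ∘ λ` is convex, and its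
tangent at `w = η(1/b)` gives `λ(w + (a - b)/2) ≥ λ(w) + log(a/b)`; testing the supremum defining
`a log α(1/a)` at `r = w + (a - b)/2` yields a supporting line of `p ↦ p log(α(1/p)/p)` at `b`.
The condition `λ'' + λ'² ≥ 0` also makes `1/ε(r) - 2r` nonincreasing, which keeps
`w + (a - b)/2` beyond `r₀`.
-/

open MeasureTheory Real Filter Set Topology

theorem convexOn_of_supporting_lines {s : Set ℝ} {f : ℝ → ℝ} (hs : Convex ℝ s)
    (h : ∀ b ∈ s, ∃ m, ∀ a ∈ s, f b + m * (a - b) ≤ f a) : ConvexOn ℝ s f := by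
  refine ⟨hs, fun x hx y hy p q hp hq hpq => ?_⟩
  obtain ⟨m, hm⟩ := h _ (hs hx hy hp hq hpq)
  have hx' := mul_le_mul_of_nonneg_left (hm x hx) hp
  have hy' := mul_le_mul_of_nonneg_left (hm y hy) hq
  simp only [smul_eq_mul] at *
  linear_combination hx' + hy' + (m * (p * x + q * y) - f (p * x + q * y)) * hpq

theorem strictConvexOn_of_strict_supporting_lines {s : Set ℝ} {f : ℝ → ℝ} (hs : Convex ℝ s)
    (h : ∀ b ∈ s, ∃ m, ∀ a ∈ s, a ≠ b → f b + m * (a - b) < f a) : StrictConvexOn ℝ s f := by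
  refine ⟨hs, fun x hx y hy hxy p q hp hq hpq => ?_⟩
  simp only [smul_eq_mul]
  obtain ⟨m, hm⟩ := h _ (hs hx hy hp.le hq.le hpq)
  have hx' : p * (f (p * x + q * y) + m * (x - (p * x + q * y))) < p * f x := by
    refine mul_lt_mul_of_pos_left (hm x hx fun h => hxy ?_) hp
    have : q * (y - x) = 0 := by linear_combination -h - x * hpq
    exact (sub_eq_zero.1 ((mul_eq_zero.1 this).resolve_left hq.ne')).symm
  have hy' : q * (f (p * x + q * y) + m * (y - (p * x + q * y))) < q * f y := by
    refine mul_lt_mul_of_pos_left (hm y hy fun h => hxy ?_) hq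
    have : p * (x - y) = 0 := by linear_combination -h - y * hpq
    exact sub_eq_zero.1 ((mul_eq_zero.1 this).resolve_left hp.ne')
  linear_combination hx' + hy' + (m * (p * x + q * y) - f (p * x + q * y)) * hpq

theorem ConvexOn.add_deriv_mul_sub_le {S : Set ℝ} {f : ℝ → ℝ} {w r : ℝ} (hf : ConvexOn ℝ S f)
    (hw : w ∈ S) (hr : r ∈ S) (hd : DifferentiableAt ℝ f w) : f w + deriv f w * (r - w) ≤ f r := by
  rcases lt_trichotomy w r with hwr | rfl | hrw
  · have := hf.deriv_le_slope hw hr hwr hd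
    rw [slope_def_field, le_div_iff₀ (sub_pos.2 hwr)] at this
    linarith
  · simp
  · have := hf.slope_le_deriv hr hw hrw hd
    rw [slope_def_field, div_le_iff₀ (sub_pos.2 hrw)] at this
    linarith

theorem ConcaveOn.le_add_deriv_mul_sub {S : Set ℝ} {f : ℝ → ℝ} {w r : ℝ} (hf : ConcaveOn ℝ S f)
    (hw : w ∈ S) (hr : r ∈ S) (hd : DifferentiableAt ℝ f w) : f r ≤ f w + deriv f w * (r - w) := by
  have := hf.neg.add_deriv_mul_sub_le hw hr hd.neg
  rw [deriv.neg] at this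
  simp only [Pi.neg_apply] at this
  linarith

theorem StrictConcaveOn.lt_add_deriv_mul_sub {S : Set ℝ} {f : ℝ → ℝ} {w r : ℝ}
    (hf : StrictConcaveOn ℝ S f) (hw : w ∈ S) (hr : r ∈ S) (hrw : r ≠ w)
    (hd : DifferentiableAt ℝ f w) : f r < f w + deriv f w * (r - w) := by
  rcases hrw.lt_or_gt with hrw | hwr
  · have := hf.deriv_lt_slope hr hw hrw hd
    rw [slope_def_field, lt_div_iff₀ (sub_pos.2 hrw)] at this
    linarith
  · have := hf.slope_lt_deriv hw hr hwr hd
    rw [slope_def_field, div_lt_iff₀ (sub_pos.2 hwr)] at this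
    linarith

theorem ConcaveOn.deriv_pos_of_strictMonoOn {f : ℝ → ℝ} {a x : ℝ} (hf : ConcaveOn ℝ (Ioi a) f)
    (hmono : StrictMonoOn f (Ioi a)) (hx : a < x) (hd : DifferentiableAt ℝ f x) :
    0 < deriv f x := by
  have hx1 : x + 1 ∈ Ioi a := by simp only [mem_Ioi]; linarith
  refine lt_of_lt_of_le ?_ (hf.slope_le_deriv hx hx1 (by linarith) hd)
  rw [slope_def_field]
  exact div_pos (sub_pos.2 (hmono hx hx1 (by linarith))) (by linarith)

theorem ConcaveOn.mul_deriv_le_sub {f : ℝ → ℝ} {x : ℝ} (hf : ConcaveOn ℝ (Ioi 0) f)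
    (hf0 : ContinuousWithinAt f (Ioi 0) 0) (hx : 0 < x) (hd : DifferentiableAt ℝ f x) :
    x * deriv f x ≤ f x - f 0 := by
  have hlim : Tendsto (fun z => (f x - f z) / (x - z)) (𝓝[>] 0) (𝓝 ((f x - f 0) / (x - 0))) :=
    (tendsto_const_nhds.sub hf0).div
      (tendsto_const_nhds.sub (tendsto_id.mono_left nhdsWithin_le_nhds)) (by simpa using hx.ne')
  have hle : deriv f x ≤ (f x - f 0) / x := by
    refine ge_of_tendsto (by simpa using hlim) ?_
    filter_upwards [Ioo_mem_nhdsGT hx] with z hz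
    have := hf.deriv_le_slope hz.1 hx hz.2 hd
    rwa [slope_def_field] at this
  rwa [le_div_iff₀ hx, mul_comm] at hle

theorem StrictAntiOn.lt_of_tendsto_nhdsGT {f : ℝ → ℝ} {a δ r : ℝ} (hf : StrictAntiOn f (Ioi a))
    (hδ : Tendsto f (𝓝[>] a) (𝓝 δ)) (hr : a < r) : f r < δ := by
  obtain ⟨m, ham, hmr⟩ := exists_between hr
  refine (hf ham hr hmr).trans_le (ge_of_tendsto hδ ?_)
  filter_upwards [Ioo_mem_nhdsGT ham] with s hs using (hf hs.1 ham hs.2).le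

theorem StrictAntiOn.leftInvOn_of_tendsto_nhdsGT {f η : ℝ → ℝ} {r₀ δ : ℝ}
    (hf : StrictAntiOn f (Ioi r₀)) (hδ : Tendsto f (𝓝[>] r₀) (𝓝 δ)) (hpos : ∀ r > r₀, 0 < f r)
    (hη : ∀ e ∈ Ioo 0 δ, r₀ < η e ∧ f (η e) = e) : LeftInvOn η f (Ioi r₀) := fun r hr =>
  have hη' := hη (f r) ⟨hpos r hr, hf.lt_of_tendsto_nhdsGT hδ hr⟩
  hf.injOn hη'.1 hr hη'.2

theorem tendsto_atTop_zero_of_antitoneOn {f : ℝ → ℝ} {r₀ : ℝ} (hf : AntitoneOn f (Ioi r₀))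
    (hnonneg : ∀ r > r₀, 0 ≤ f r) (hsmall : ∀ c > 0, ∃ r > r₀, f r < c) :
    Tendsto f atTop (𝓝 0) := by
  refine tendsto_order.2 ⟨fun a ha => ?_, fun a ha => ?_⟩
  · filter_upwards [eventually_gt_atTop r₀] with r hr using ha.trans_le (hnonneg r hr)
  · obtain ⟨r, hr, hfr⟩ := hsmall a ha
    filter_upwards [eventually_ge_atTop r] with s hs
    exact (hf hr (hr.trans_le hs) hs).trans_lt hfr

theorem inv_sub_inv_le_of_neg_mul_sq_le_deriv {ε : ℝ → ℝ} {r₀ δ c t : ℝ}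
    (hd : ∀ r > r₀, DifferentiableAt ℝ ε r) (hpos : ∀ r > r₀, 0 < ε r)
    (hε' : ∀ r > r₀, -(c * ε r ^ 2) ≤ deriv ε r) (hδ : Tendsto ε (𝓝[>] r₀) (𝓝 δ)) (hδ0 : δ ≠ 0)
    (ht : r₀ < t) : (ε t)⁻¹ - δ⁻¹ ≤ c * (t - r₀) := by
  have hinv : ∀ r > r₀, HasDerivAt (fun r => (ε r)⁻¹) (-deriv ε r / ε r ^ 2) r :=
    fun r hr => (hd r hr).hasDerivAt.inv (hpos r hr).ne'
  have hmvt := (convex_Ioi r₀).image_sub_le_mul_sub_of_deriv_le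
    (fun r hr => (hinv r hr).continuousAt.continuousWithinAt)
    (fun r hr => (hinv r (interior_subset hr)).differentiableAt.differentiableWithinAt)
    (C := c) (fun r hr => by
      rw [interior_Ioi] at hr
      rw [(hinv r hr).deriv, div_le_iff₀ (pow_pos (hpos r hr) 2)]
      linarith [hε' r hr])
  refine le_of_tendsto_of_tendsto (tendsto_const_nhds.sub (hδ.inv₀ hδ0))
    ((tendsto_const_nhds.sub (tendsto_id.mono_left nhdsWithin_le_nhds)).const_mul c) ?_
  filter_upwards [Ioo_mem_nhdsGT ht] with s hs using hmvt s hs.1 t ht hs.2.le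

theorem convexOn_exp_comp_of_deriv2_add_sq_nonneg {D : Set ℝ} {L : ℝ → ℝ} (hD : Convex ℝ D)
    (hL : Differentiable ℝ L) (hL' : Differentiable ℝ (deriv L))
    (h : ∀ r ∈ interior D, 0 ≤ deriv (deriv L) r + deriv L r ^ 2) :
    ConvexOn ℝ D (fun r => exp (L r)) :=
  convexOn_of_hasDerivWithinAt2_nonneg hD (hL.continuous.rexp.continuousOn)
    (fun r _ => (hL r).hasDerivAt.exp.hasDerivWithinAt)
    (fun r _ => ((hL r).hasDerivAt.exp.mul (hL' r).hasDerivAt).hasDerivWithinAt)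
    (fun r hr => by
      have := mul_nonneg (exp_pos (L r)).le (h r hr)
      linarith)

theorem StrictConcaveOn.strictConvexOn_legendre {L η : ℝ → ℝ} {S D : Set ℝ}
    (hL : StrictConcaveOn ℝ S L) (hd : ∀ r ∈ S, DifferentiableAt ℝ L r) (hD : Convex ℝ D)
    (hη : ∀ e ∈ D, η e ∈ S ∧ deriv L (η e) = 2 * e) :
    StrictConvexOn ℝ D (fun e => L (η e) - 2 * e * η e) := by
  refine strictConvexOn_of_strict_supporting_lines hD fun z hz => ⟨-2 * η z, fun x hx hxz => ?_⟩
  have hne : η z ≠ η x := fun h => hxz (by linarith [(hη x hx).2, h ▸ (hη z hz).2])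
  have := hL.lt_add_deriv_mul_sub (hη x hx).1 (hη z hz).1 hne (hd _ (hη x hx).1)
  rw [(hη x hx).2] at this
  linarith

theorem ConcaveOn.convexOn_mul_legendre_inv_sub_log {L η : ℝ → ℝ} {r₀ δ : ℝ}
    (hL : ConcaveOn ℝ (Ioi r₀) L) (hd : Differentiable ℝ L)
    (hexp : ConvexOn ℝ (Ioi r₀) (fun r => exp (L r))) (hδ : 0 < δ)
    (hη : ∀ e ∈ Ioo 0 δ, r₀ < η e ∧ deriv L (η e) = 2 * e)
    (hηlb : ∀ e ∈ Ioo 0 δ, e⁻¹ - δ⁻¹ ≤ 2 * (η e - r₀)) :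
    ConvexOn ℝ (Ioi δ⁻¹) (fun p => p * (L (η p⁻¹) - 2 * p⁻¹ * η p⁻¹ - log p)) := by
  have hinv : ∀ p ∈ Ioi δ⁻¹, 0 < p ∧ p⁻¹ ∈ Ioo 0 δ := fun p hp =>
    have hp0 : 0 < p := (inv_pos.2 hδ).trans hp
    ⟨hp0, inv_pos.2 hp0, (inv_lt_comm₀ hp0 hδ).2 hp⟩
  refine convexOn_of_supporting_lines (convex_Ioi _) fun b hb => ⟨L (η b⁻¹) - 1 - log b, ?_⟩
  intro a ha
  obtain ⟨hb0, hbδ⟩ := hinv b hb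
  obtain ⟨ha0, haδ⟩ := hinv a ha
  obtain ⟨hw, hLw⟩ := hη _ hbδ
  set w := η b⁻¹
  -- at `r` the tangent of `exp ∘ L` at `w` (slope `2 exp (L w) / b`) equals `exp (L w) * a / b`
  set r := w + (a - b) / 2 with hr_def
  have hr : r₀ < r := by
    have := hηlb _ hbδ
    rw [inv_inv] at this
    linarith [mem_Ioi.1 ha]
  have hgrowth : L w + log (a / b) ≤ L r := by
    have := hexp.add_deriv_mul_sub_le hw hr (hd w).exp
    rw [deriv_exp (hd w), hLw] at this
    rw [← exp_le_exp, exp_add, exp_log (div_pos ha0 hb0)]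
    convert this using 1
    field_simp
    ring
  have hmax : L r - 2 * a⁻¹ * r ≤ L (η a⁻¹) - 2 * a⁻¹ * η a⁻¹ := by
    have := hL.le_add_deriv_mul_sub (hη _ haδ).1 hr (hd _)
    rw [(hη _ haδ).2] at this
    linarith
  have h1 := mul_le_mul_of_nonneg_left hmax ha0.le
  have h2 := mul_le_mul_of_nonneg_left hgrowth ha0.le
  rw [log_div ha0.ne' hb0.ne'] at h2
  field_simp at h1 ⊢
  linarith

theorem convexOn_mul_log_div_of_deriv2_add_sq_nonneg {L η α : ℝ → ℝ} {r₀ δ : ℝ}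
    (hL : Differentiable ℝ L) (hL' : Differentiable ℝ (deriv L)) (hconc : ConcaveOn ℝ (Ioi r₀) L)
    (hsq : ∀ r > r₀, 0 ≤ deriv (deriv L) r + deriv L r ^ 2) (hpos : ∀ r > r₀, 0 < deriv L r)
    (hδ : Tendsto (fun r => deriv L r / 2) (𝓝[>] r₀) (𝓝 δ)) (hδ0 : 0 < δ)
    (hη : ∀ e ∈ Ioo 0 δ, r₀ < η e ∧ deriv L (η e) = 2 * e)
    (hα : ∀ e, α e = exp (L (η e) - 2 * e * η e)) :
    ConvexOn ℝ (Ioi δ⁻¹) (fun p => p * log (α p⁻¹ / p)) := by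
  have hexp := convexOn_exp_comp_of_deriv2_add_sq_nonneg (convex_Ioi r₀) hL hL'
    fun r hr => hsq r (by simpa using hr)
  have hηlb : ∀ e ∈ Ioo 0 δ, e⁻¹ - δ⁻¹ ≤ 2 * (η e - r₀) := fun e he => by
    have := inv_sub_inv_le_of_neg_mul_sq_le_deriv (fun r _ => (hL' r).div_const 2)
      (fun r hr => half_pos (hpos r hr)) (fun r hr => ?_) hδ hδ0.ne' (hη e he).1 (c := 2)
    · rwa [(hη e he).2, mul_div_cancel_left₀ _ two_ne_zero] at this
    · rw [deriv_div_const]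
      linarith [hsq r hr]
  refine (hconc.convexOn_mul_legendre_inv_sub_log hL hexp hδ0 hη hηlb).congr fun p hp => ?_
  have hp0 : 0 < p := (inv_pos.2 hδ0).trans hp
  simp only [hα, log_div (exp_pos _).ne' hp0.ne', log_exp]

noncomputable def logProfile (μ : ℝ → ℝ) (r : ℝ) : ℝ := r + log (μ (exp (-r)))

theorem hasDerivAt_logProfile {μ : ℝ → ℝ} {r : ℝ} (hd : DifferentiableAt ℝ μ (exp (-r)))
    (hpos : μ (exp (-r)) ≠ 0) :
    HasDerivAt (logProfile μ) (1 - exp (-r) * deriv μ (exp (-r)) / μ (exp (-r))) r := by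
  have hexp : HasDerivAt (fun r => exp (-r)) (-exp (-r)) r := by
    simpa using (hasDerivAt_neg r).exp
  refine ((hasDerivAt_id' r).add ((hd.hasDerivAt.comp r hexp).log hpos)).congr_deriv ?_
  simp only [Function.comp]
  ring

theorem contDiff_logProfile {μ : ℝ → ℝ} {n : WithTop ℕ∞} (hμ : ContDiffOn ℝ n μ (Ioi 0))
    (hpos : ∀ x > 0, 0 < μ x) : ContDiff ℝ n (logProfile μ) := by
  rw [contDiff_iff_contDiffAt]
  intro r
  have hμr : ContDiffAt ℝ n μ (exp (-r)) := hμ.contDiffAt (isOpen_Ioi.mem_nhds (exp_pos _))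
  have hcomp := hμr.comp r (contDiff_exp.comp contDiff_neg).contDiffAt
  exact contDiffAt_id.add (hcomp.log (hpos _ (exp_pos _)).ne')

theorem deriv_logProfile_mem_Ico {μ : ℝ → ℝ} (r : ℝ) (hc : ContinuousWithinAt μ (Ioi 0) 0)
    (h0 : μ 0 = 0) (hd : ∀ x > 0, DifferentiableAt ℝ μ x) (hmono : StrictMonoOn μ (Ioi 0))
    (hconc : ConcaveOn ℝ (Ioi 0) μ) (hpos : ∀ x > 0, 0 < μ x) :
    deriv (logProfile μ) r ∈ Ico 0 1 := by
  have hx := exp_pos (-r)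
  rw [(hasDerivAt_logProfile (hd _ hx) (hpos _ hx).ne').deriv, mem_Ico, sub_nonneg,
    sub_lt_self_iff, div_le_one (hpos _ hx)]
  exact ⟨by simpa [h0] using hconc.mul_deriv_le_sub hc hx (hd _ hx),
    div_pos (mul_pos hx (hconc.deriv_pos_of_strictMonoOn hmono hx (hd _ hx))) (hpos _ hx)⟩

theorem exp_neg_rpow_mul_exp_logProfile {μ : ℝ → ℝ} {r : ℝ} (e : ℝ) (hpos : 0 < μ (exp (-r))) :
    exp (-r) ^ (1 - 2 * e) * exp (logProfile μ r - 2 * e * r) = μ (exp (-r)) := by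
  rw [rpow_def_of_pos (exp_pos _), log_exp, ← exp_add, logProfile]
  convert exp_log hpos using 2
  ring

theorem mul_rpow_le_of_le_deriv_logProfile {μ : ℝ → ℝ} {a c x : ℝ}
    (hd : Differentiable ℝ (logProfile μ)) (hc : ∀ r ≥ a, c ≤ deriv (logProfile μ) r)
    (hpos : 0 < μ x) (hx : x ∈ Ioc 0 (exp (-a))) :
    exp (logProfile μ a - c * a) * x ^ (1 - c) ≤ μ x := by
  have hxa : a ≤ -log x := by
    rw [le_neg, ← log_exp (-a)]; exact log_le_log hx.1 hx.2
  have hmvt := (convex_Ici a).mul_sub_le_image_sub_of_le_deriv hd.continuous.continuousOn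
    hd.differentiableOn (fun r hr => hc r (interior_subset hr))
    a self_mem_Ici (-log x) hxa hxa
  have hLx : logProfile μ (-log x) = -log x + log (μ x) := by
    rw [logProfile, neg_neg, exp_log hx.1]
  rw [rpow_def_of_pos hx.1, ← exp_add, ← exp_log hpos]
  exact exp_le_exp.2 (by rw [hLx] at hmvt; nlinarith)

theorem lintegral_inv_lt_top_of_rpow_le {μ : ℝ → ℝ} {x₀ C κ : ℝ} (hpos : ∀ x > 0, 0 < μ x)
    (hmono : MonotoneOn μ (Ioi 0)) (hx₀ : 0 < x₀) (hC : 0 < C) (hκ : κ < 1)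
    (hle : ∀ x ∈ Ioc 0 x₀, C * x ^ κ ≤ μ x) :
    ∫⁻ x in Ioo 0 1, ENNReal.ofReal (μ x)⁻¹ < ⊤ := by
  set g : ℝ → ℝ := fun x => C⁻¹ * x ^ (-κ) + (μ x₀)⁻¹
  have hg : IntegrableOn g (Ioo 0 1) :=
    (((intervalIntegral.integrableOn_Ioo_rpow_iff one_pos).2 (by linarith)).const_mul _).add
      (integrableOn_const measure_Ioo_lt_top.ne)
  have hbound : ∀ x ∈ Ioo (0 : ℝ) 1, (μ x)⁻¹ ≤ g x := by
    intro x hx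
    have hpow : 0 < x ^ κ := rpow_pos_of_pos hx.1 κ
    rcases le_or_gt x x₀ with hxx₀ | hx₀x
    · have : (μ x)⁻¹ ≤ C⁻¹ * x ^ (-κ) := by
        rw [rpow_neg hx.1.le, ← mul_inv]
        exact inv_anti₀ (mul_pos hC hpow) (hle x ⟨hx.1, hxx₀⟩)
      have := inv_pos.2 (hpos x₀ hx₀)
      simp only [g]; linarith
    · have : (μ x)⁻¹ ≤ (μ x₀)⁻¹ := inv_anti₀ (hpos x₀ hx₀) (hmono hx₀ hx.1 hx₀x.le)
      have := mul_pos (inv_pos.2 hC) (rpow_pos_of_pos hx.1 (-κ))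
      simp only [g]; linarith
  calc ∫⁻ x in Ioo 0 1, ENNReal.ofReal (μ x)⁻¹
      ≤ ∫⁻ x in Ioo 0 1, ENNReal.ofReal (g x) :=
        setLIntegral_mono (by fun_prop) fun x hx => ENNReal.ofReal_le_ofReal (hbound x hx)
    _ < ⊤ := hg.lintegral_lt_top

theorem exists_deriv_logProfile_lt {μ : ℝ → ℝ} (hpos : ∀ x > 0, 0 < μ x)
    (hmono : MonotoneOn μ (Ioi 0))
    (hOsgood : ∫⁻ r in Ioo (0:ℝ) 1, ENNReal.ofReal (μ r)⁻¹ = ⊤)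
    (hd : Differentiable ℝ (logProfile μ)) (r₀ : ℝ) {c : ℝ} (hc : 0 < c) :
    ∃ r > r₀, deriv (logProfile μ) r < c := by
  by_contra! hge
  refine (lintegral_inv_lt_top_of_rpow_le hpos hmono (exp_pos (-(r₀ + 1)))
    (exp_pos (logProfile μ (r₀ + 1) - c * (r₀ + 1)))
    (by linarith : 1 - c < 1) fun x hx => ?_).ne hOsgood
  exact mul_rpow_le_of_le_deriv_logProfile hd (fun r hr => hge r (by linarith)) (hpos x hx.1) hx

theorem stmt17 (μ : ℝ → ℝ)
    (hc : ContinuousOn μ (Set.Ici 0)) (h0 : μ 0 = 0)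
    (hC2 : ContDiffOn ℝ 2 μ (Set.Ioi 0))
    (hmono : StrictMonoOn μ (Set.Ici 0))
    (hconc : ConcaveOn ℝ (Set.Ioi 0) μ)
    (hpos : ∀ x > 0, 0 < μ x)
    (hOsgood : ∫⁻ r in Set.Ioo (0:ℝ) 1, ENNReal.ofReal (μ r)⁻¹ = ⊤)
    (lam eps : ℝ → ℝ)
    (hlam : ∀ r, lam r = r + Real.log (μ (Real.exp (-r))))
    (heps : ∀ r, eps r = deriv lam r / 2)
    (r₀ : ℝ) (hlam'' : ∀ r > r₀, deriv (deriv lam) r < 0)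
    (δ : ℝ) (hδ : Tendsto eps (nhdsWithin r₀ (Set.Ioi r₀)) (nhds δ))
    (η : ℝ → ℝ) (hη : ∀ e ∈ Set.Ioo (0:ℝ) δ, r₀ < η e ∧ eps (η e) = e)
    (α : ℝ → ℝ) (hα : ∀ e, α e = Real.exp (lam (η e) - 2 * e * η e)) :
    StrictAntiOn eps (Set.Ioi r₀) ∧
    (∀ r > r₀, eps r ∈ Set.Ioo (0:ℝ) (1/2)) ∧
    Tendsto eps atTop (nhds 0) ∧
    (∀ r > r₀, (Real.exp (-r)) ^ (1 - 2 * eps r) * α (eps r) = μ (Real.exp (-r))) ∧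
    StrictConvexOn ℝ (Set.Ioo 0 δ) (fun e => Real.log (α e)) ∧
    ((∀ r > r₀, 0 ≤ deriv (deriv lam) r + (deriv lam r) ^ 2) →
      ConvexOn ℝ (Set.Ioi δ⁻¹) (fun p => p * Real.log (α p⁻¹ / p))) := by
  obtain rfl : lam = logProfile μ := funext hlam
  obtain rfl : eps = fun r => deriv (logProfile μ) r / 2 := funext heps
  have hd : ∀ x > 0, DifferentiableAt ℝ μ x := fun x hx =>
    (hC2.contDiffAt (isOpen_Ioi.mem_nhds hx)).differentiableAt two_ne_zero
  have hL2 := contDiff_logProfile hC2 hpos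
  have hL := hL2.differentiable two_ne_zero
  have hL'' := hL2.differentiable_deriv_two
  have hmono' := hmono.mono Ioi_subset_Ici_self
  have hrange r := deriv_logProfile_mem_Ico r ((hc 0 self_mem_Ici).mono Ioi_subset_Ici_self) h0
    hd hmono' hconc hpos
  have hconcL : StrictConcaveOn ℝ (Ioi r₀) (logProfile μ) :=
    strictConcaveOn_of_deriv2_neg (convex_Ioi r₀) hL.continuous.continuousOn fun r hr =>
      hlam'' r (by simpa using hr)
  have hanti : StrictAntiOn (fun r => deriv (logProfile μ) r / 2) (Ioi r₀) := fun x hx y hy hxy =>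
    div_lt_div_of_pos_right (hconcL.strictAntiOn_deriv (fun r _ => hL r) hx hy hxy) two_pos
  have hε : ∀ r > r₀, deriv (logProfile μ) r / 2 ∈ Ioo 0 (1 / 2) := fun r hr =>
    ⟨(div_nonneg (hrange (r + 1)).1 zero_le_two).trans_lt
      (hanti hr (mem_Ioi.2 (hr.trans (lt_add_one r))) (lt_add_one r)),
     by linarith [(hrange r).2]⟩
  have hδ0 : 0 < δ :=
    (hε _ (lt_add_one r₀)).1.trans (hanti.lt_of_tendsto_nhdsGT hδ (lt_add_one r₀))
  have hη' : ∀ e ∈ Ioo 0 δ, r₀ < η e ∧ deriv (logProfile μ) (η e) = 2 * e := fun e he =>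
    ⟨(hη e he).1, by linarith [(hη e he).2]⟩
  refine ⟨hanti, hε, ?_, fun r hr => ?_, ?_, fun hsq => ?_⟩
  · refine tendsto_atTop_zero_of_antitoneOn hanti.antitoneOn (fun r hr => (hε r hr).1.le)
      fun c hc => ?_
    obtain ⟨r, hr, hrc⟩ :=
      exists_deriv_logProfile_lt hpos hmono'.monotoneOn hOsgood hL r₀ (mul_pos two_pos hc)
    exact ⟨r, hr, by linarith⟩
  · rw [hα, hanti.leftInvOn_of_tendsto_nhdsGT hδ (fun r hr => (hε r hr).1) hη hr]
    exact exp_neg_rpow_mul_exp_logProfile _ (hpos _ (exp_pos _))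
  · exact (hconcL.strictConvexOn_legendre (fun r _ => hL r) (convex_Ioo 0 δ) hη').congr
      fun e _ => by rw [hα, log_exp]
  exact convexOn_mul_log_div_of_deriv2_add_sq_nonneg hL hL'' hconcL.concaveOn hsq
    (fun r hr => by linarith [(hε r hr).1]) hδ hδ0 hη' hα
end
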